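/- For every positive integer N and every nonnegative integer k, one has the Gamma-function identity 2^{2Nk} ∏_{j=1}^{N} [Γ(N+j−1) Γ(k+j−1/2)] / [Γ(j−1/2) Γ(k+j+N−1)] = (2^{k(k+1)/2} ∏_{j=1}^{k−1} j!/(2j)!) · ∏_{0 ≤ i < j ≤ k−1} (N + (i+j)/2). -/

import Mathlib

/-!
Induction on `k`; for `k = 0` both sides equal `1`. Passing from `k` to `k + 1`, the functional
equation `Γ(s + 1) = s Γ(s)` multiplies the left side by
`4^N ∏_{j=1}^{N} (k + j - 1/2) / (k + j + N - 1)`, while the right side gains the factor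
`2^{k+1} k!/(2k)! ∏_{i<k} (N + (i + k)/2)`. Written as quotients of Gamma values, these two
factors agree by Legendre's duplication formula at `s = k + N` and at `s = k + 1/2`.
-/

open Finset Real
open scoped Nat

theorem Finset.prod_Icc_one_eq_prod_range {M : Type*} [CommMonoid M] (f : ℕ → M) (n : ℕ) :
    ∏ j ∈ Icc 1 n, f j = ∏ i ∈ range n, f (i + 1) := by
  rw [range_eq_Ico, prod_Ico_add' f, zero_add, Ico_add_one_right_eq_Icc]

theorem Finset.prod_Icc_one_sub_one_eq_prod_range {M : Type*} [CommMonoid M] {f : ℕ → M}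
    (hf : f 0 = 1) (n : ℕ) : ∏ j ∈ Icc 1 (n - 1), f j = ∏ j ∈ range n, f j := by
  cases n with
  | zero => simp
  | succ n => rw [Nat.add_sub_cancel, prod_range_succ', hf, mul_one, prod_Icc_one_eq_prod_range]

namespace Real

theorem prod_range_add_eq_Gamma_div {x : ℝ} (hx : 0 < x) (n : ℕ) :
    ∏ i ∈ range n, (x + i) = Gamma (x + n) / Gamma x := by
  rw [eq_div_iff (Gamma_pos_of_pos hx).ne']
  induction n with
  | zero => simp
  | succ n ih =>
    rw [prod_range_succ, Nat.cast_succ, ← add_assoc, Gamma_add_one (by positivity), ← ih]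
    ring

theorem Gamma_mul_Gamma_add_half_mul_two_pow {s : ℝ} {m : ℕ} (hs : 2 * s = m) :
    Gamma s * Gamma (s + 1 / 2) * 2 ^ m = 2 * Gamma m * √π := by
  rw [Gamma_mul_Gamma_add_half, hs, rpow_sub two_pos, rpow_one, rpow_natCast]
  field_simp

theorem mul_Gamma_add_one_div_mul_Gamma_add_one (c d : ℝ) {a b : ℝ}
    (ha : a ≠ 0) (hb : b ≠ 0) :
    c * Gamma (a + 1) / (d * Gamma (b + 1)) = c * Gamma a / (d * Gamma b) * (a / b) := by
  rw [Gamma_add_one ha, Gamma_add_one hb]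
  ring

theorem two_pow_mul_Gamma_ratio_eq (N k : ℕ) (h : 0 < k + N) :
    (2 : ℝ) ^ (2 * N) *
        (Gamma (k + 1 / 2 + N) / Gamma (k + 1 / 2) / (Gamma (k + N + N) / Gamma (k + N))) =
      2 ^ (k + 1) * (Gamma (k + 1) / Gamma (2 * k + 1)) *
        (Gamma (k + N + N + k) / Gamma (k + N + N) / 2 ^ k) := by
  have dup₁ : Gamma (k + N) * Gamma (k + 1 / 2 + N) * 2 ^ (k + N + N + k) =
      2 * Gamma (k + N + N + k) * √π := by
    rw [add_right_comm _ (1 / 2 : ℝ)]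
    exact_mod_cast Gamma_mul_Gamma_add_half_mul_two_pow (m := k + N + N + k) (by push_cast; ring)
  have dup₂ :
      Gamma (k + 1 / 2) * Gamma (k + 1) * 2 ^ (2 * k + 1) = 2 * Gamma (2 * k + 1) * √π := by
    rw [show (k : ℝ) + 1 = k + 1 / 2 + 1 / 2 by ring]
    exact_mod_cast Gamma_mul_Gamma_add_half_mul_two_pow (m := 2 * k + 1) (by push_cast; ring)
  have hkN : (0 : ℝ) < k + N := by exact_mod_cast h
  have hΓ : ∀ x : ℝ, 0 < x → Gamma x ≠ 0 := fun x hx => (Gamma_pos_of_pos hx).ne'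
  have h₁ := hΓ (k + N + N) (by positivity)
  have h₂ := hΓ (k + N) hkN
  have h₃ := hΓ (k + 1 / 2) (by positivity)
  have h₄ := hΓ (2 * k + 1) (by positivity)
  -- freeze the Gamma values, so that `field_simp` does not rewrite their arguments
  generalize Gamma (k + N + N) = a, Gamma (k + N) = b, Gamma (k + 1 / 2) = c,
    Gamma (2 * k + 1) = d, Gamma (k + 1 / 2 + N) = e, Gamma (k + N + N + k) = f,
    Gamma (k + 1) = g at *
  field_simp
  apply mul_left_cancel₀ (show 2 * √π * 2 ^ (2 * k) ≠ 0 by positivity)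
  linear_combination
    (c * g * 2 ^ (3 * k + 1)) * dup₁ - (e * b * 2 ^ (2 * N + 2 * k) * 2 ^ k) * dup₂

end Real

noncomputable def gammaProd (N k : ℕ) : ℝ :=
  (2 : ℝ) ^ (2 * N * k) *
    ∏ j ∈ Icc 1 N,
      Gamma ((N : ℝ) + j - 1) * Gamma ((k : ℝ) + j - 1 / 2) /
        (Gamma ((j : ℝ) - 1 / 2) * Gamma ((k : ℝ) + j + N - 1))

noncomputable def pairProd (N k : ℕ) : ℝ :=
  ((2 : ℝ) ^ (k * (k + 1) / 2) * ∏ j ∈ Icc 1 (k - 1), (j ! : ℝ) / (2 * j)!) *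
    ∏ j ∈ range k, ∏ i ∈ range j, ((N : ℝ) + (i + j) / 2)

theorem gammaProd_zero (N : ℕ) : gammaProd N 0 = 1 := by
  rw [gammaProd, mul_zero, pow_zero, one_mul]
  refine prod_eq_one fun j hj => ?_
  have hj : (1 : ℝ) ≤ j ∧ (j : ℝ) ≤ N := by exact_mod_cast mem_Icc.mp hj
  rw [Nat.cast_zero, zero_add, add_comm (N : ℝ), mul_comm]
  exact div_self (mul_ne_zero (Gamma_pos_of_pos (by linarith)).ne'
    (Gamma_pos_of_pos (by linarith)).ne')

theorem pairProd_zero (N : ℕ) : pairProd N 0 = 1 := by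
  simp [pairProd]

theorem gammaProd_succ (N k : ℕ) :
    gammaProd N (k + 1) =
      gammaProd N k *
        (2 ^ (2 * N) * ∏ j ∈ Icc 1 N, (((k : ℝ) + j - 1 / 2) / (k + j + N - 1))) := by
  rw [gammaProd, gammaProd, mul_add_one, pow_add, mul_mul_mul_comm, ← prod_mul_distrib]
  congr 1
  refine prod_congr rfl fun j hj => ?_
  have hj : (1 : ℝ) ≤ j ∧ (j : ℝ) ≤ N := by exact_mod_cast mem_Icc.mp hj
  rw [show ((k + 1 : ℕ) : ℝ) + j - 1 / 2 = k + j - 1 / 2 + 1 by push_cast; ring,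
    show ((k + 1 : ℕ) : ℝ) + j + N - 1 = k + j + N - 1 + 1 by push_cast; ring,
    mul_Gamma_add_one_div_mul_Gamma_add_one _ _ (by linarith) (by linarith)]

theorem pairProd_succ (N k : ℕ) :
    pairProd N (k + 1) =
      pairProd N k *
        (2 ^ (k + 1) * ((k ! : ℝ) / (2 * k)!) *
          ∏ i ∈ range k, ((N : ℝ) + (i + k) / 2)) := by
  have htri : (k + 1) * (k + 1 + 1) / 2 = k * (k + 1) / 2 + (k + 1) := by
    simpa only [Nat.add_sub_cancel, mul_comm] using Nat.triangle_succ (k + 1)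
  simp only [pairProd, htri, pow_add,
    prod_Icc_one_sub_one_eq_prod_range (f := fun j ↦ (j ! : ℝ) / (2 * j)!) (by simp),
    prod_range_succ (n := k)]
  ring

theorem gammaProd_ratio_eq_pairProd_ratio (N k : ℕ) (h : 0 < k + N) :
    (2 : ℝ) ^ (2 * N) * ∏ j ∈ Icc 1 N, (((k : ℝ) + j - 1 / 2) / (k + j + N - 1)) =
      2 ^ (k + 1) * ((k ! : ℝ) / (2 * k)!) * ∏ i ∈ range k, ((N : ℝ) + (i + k) / 2) := by
  have hkN : (0 : ℝ) < k + N := by exact_mod_cast h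
  have hnum :
      ∏ j ∈ Icc 1 N, ((k : ℝ) + j - 1 / 2) = Gamma (k + 1 / 2 + N) / Gamma (k + 1 / 2) := by
    rw [← prod_range_add_eq_Gamma_div (by positivity), prod_Icc_one_eq_prod_range]
    exact prod_congr rfl fun i _ => by push_cast; ring
  have hden : ∏ j ∈ Icc 1 N, ((k : ℝ) + j + N - 1) = Gamma (k + N + N) / Gamma (k + N) := by
    rw [← prod_range_add_eq_Gamma_div hkN, prod_Icc_one_eq_prod_range]
    exact prod_congr rfl fun i _ => by push_cast; ring
  have hmid : ∏ i ∈ range k, ((N : ℝ) + (i + k) / 2) =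
      Gamma (k + N + N + k) / Gamma (k + N + N) / 2 ^ k := by
    rw [← prod_range_add_eq_Gamma_div (by positivity), eq_div_iff (by positivity),
      show (2 : ℝ) ^ k = ∏ _i ∈ range k, 2 by simp, ← prod_mul_distrib]
    exact prod_congr rfl fun i _ => by ring
  rw [prod_div_distrib, hnum, hden, hmid, ← Gamma_nat_eq_factorial, ← Gamma_nat_eq_factorial]
  push_cast
  exact two_pow_mul_Gamma_ratio_eq N k h

theorem gamma_product_identity (N : ℕ) (hN : 0 < N) (k : ℕ) :
    (2 : ℝ) ^ (2 * N * k) *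
        ∏ j ∈ Finset.Icc 1 N,
          Real.Gamma ((N : ℝ) + (j : ℝ) - 1) * Real.Gamma ((k : ℝ) + (j : ℝ) - 1/2) /
            (Real.Gamma ((j : ℝ) - 1/2) * Real.Gamma ((k : ℝ) + (j : ℝ) + (N : ℝ) - 1)) =
      ((2 : ℝ) ^ (k * (k + 1) / 2) *
          ∏ j ∈ Finset.Icc 1 (k - 1), (j.factorial : ℝ) / ((2 * j).factorial : ℝ)) *
        ∏ j ∈ Finset.range k, ∏ i ∈ Finset.range j,
          ((N : ℝ) + ((i : ℝ) + (j : ℝ)) / 2) := by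
  show gammaProd N k = pairProd N k
  induction k with
  | zero => rw [gammaProd_zero, pairProd_zero]
  | succ k ih =>
    rw [gammaProd_succ, pairProd_succ, ih, gammaProd_ratio_eq_pairProd_ratio N k (by omega)]
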